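/- A pattern φ is functional in a model M (|ρ̄(φ)| = 1 for all valuations ρ) if and only if M ⊨ ∃y.(φ = y), where y ∉ FV(φ). In particular, for a symbol σ, σ_M is a total function (each σ_M(a₁,...,aₙ) is a singleton) iff M ⊨ ∃y. σ(x₁,...,xₙ) = y. -/

import Mathlib

/-!
Under the definedness axiom `⌈x⌉`, the pattern `⌈ψ⌉` denotes the whole carrier when `ψ` is
nonempty and nothing otherwise, so `⌊ψ⌋` is everything exactly when `ψ` is, and `φ = y` holds
at `ρ` exactly when `ρ̄(φ) = {ρ(y)}`. Since `y ∉ FV(φ)`, changing `ρ(y)` does not change `ρ̄(φ)`,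
so `∃y. φ = y` holds at `ρ` iff `ρ̄(φ)` is a singleton. For a symbol applied to the pairwise
distinct variables `x₁, …, xₙ`, every argument tuple is the value of these variables under some
valuation, so functionality of that pattern is totality of `σ_M`.
-/

namespace ML

structure Signature where
  S : Type
  Sym : Type
  n : Sym → ℕ
  arg : (f : Sym) → Fin (n f) → S
  res : Sym → S

inductive Pattern (σ : Signature) : σ.S → Type
  | var (s : σ.S) (x : ℕ) : Pattern σ s
  | app (f : σ.Sym) (args : ∀ i : Fin (σ.n f), Pattern σ (σ.arg f i)) : Pattern σ (σ.res f)
  | neg {s : σ.S} (φ : Pattern σ s) : Pattern σ s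
  | and {s : σ.S} (φ ψ : Pattern σ s) : Pattern σ s
  | ex {s : σ.S} (s' : σ.S) (x : ℕ) (φ : Pattern σ s) : Pattern σ s

namespace Pattern

variable {σ : Signature}

def or {s : σ.S} (φ ψ : Pattern σ s) : Pattern σ s := .neg (.and (.neg φ) (.neg ψ))

def imp {s : σ.S} (φ ψ : Pattern σ s) : Pattern σ s := .or (.neg φ) ψ

def piff {s : σ.S} (φ ψ : Pattern σ s) : Pattern σ s := .and (.imp φ ψ) (.imp ψ φ)

def all {s : σ.S} (s' : σ.S) (x : ℕ) (φ : Pattern σ s) : Pattern σ s :=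
  .neg (.ex s' x (.neg φ))

end Pattern

/-- Free variables of a pattern, as sort-variable pairs. -/
def FV {σ : Signature} : {s : σ.S} → Pattern σ s → Set ((s : σ.S) × ℕ)
  | _, .var s x => {⟨s, x⟩}
  | _, .app _ args => ⋃ i, FV (args i)
  | _, .neg φ => FV φ
  | _, .and φ ψ => FV φ ∪ FV ψ
  | _, .ex s' x φ => FV φ \ {⟨s', x⟩}

structure Model (σ : Signature) where
  carrier : σ.S → Type
  nonempty : ∀ s, Nonempty (carrier s)
  interp : (f : σ.Sym) → (∀ i : Fin (σ.n f), carrier (σ.arg f i)) → Set (carrier (σ.res f))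

def Val {σ : Signature} (M : Model σ) := (s : σ.S) → ℕ → M.carrier s

open Classical in
noncomputable def Val.upd {σ : Signature} {M : Model σ} (ρ : Val M) (s : σ.S) (x : ℕ)
    (a : M.carrier s) : Val M :=
  fun s' y => if h : s' = s ∧ y = x then cast (congrArg M.carrier h.1).symm a else ρ s' y

/-- Pattern evaluation: the set of elements matching the pattern. -/
noncomputable def eval {σ : Signature} {M : Model σ} :
    {s : σ.S} → Pattern σ s → Val M → Set (M.carrier s)
  | _, .var s x, ρ => {ρ s x}
  | _, .app f args, ρ =>
      { b | ∃ a : ∀ i, M.carrier (σ.arg f i), (∀ i, a i ∈ eval (args i) ρ) ∧ b ∈ M.interp f a }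
  | _, .neg φ, ρ => (eval φ ρ)ᶜ
  | _, .and φ ψ, ρ => eval φ ρ ∩ eval ψ ρ
  | _, .ex s' x φ, ρ => ⋃ a : M.carrier s', eval φ (ρ.upd s' x a)

def Sat {σ : Signature} (M : Model σ) {s : σ.S} (φ : Pattern σ s) : Prop :=
  ∀ ρ : Val M, eval φ ρ = Set.univ

def Valid {σ : Signature} {s : σ.S} (φ : Pattern σ s) : Prop :=
  ∀ M : Model σ, Sat M φ

end ML
namespace ML

variable {σ : Signature}

/-- The argument sort of a unary (definedness) symbol. -/
def arg1 (d : σ.Sym) (hn : σ.n d = 1) : σ.S := σ.arg d ⟨0, by omega⟩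

/-- Definedness applied to a pattern: `⌈φ⌉`. -/
noncomputable def ceil (d : σ.Sym) (hn : σ.n d = 1) (φ : Pattern σ (arg1 d hn)) :
    Pattern σ (σ.res d) :=
  .app d (fun j => cast (by
    have hj : j = (⟨0, by omega⟩ : Fin (σ.n d)) := Fin.ext (by have := j.isLt; omega)
    rw [hj]; rfl) φ)

/-- The definedness axiom pattern `⌈x⌉`. -/
noncomputable def defAx (d : σ.Sym) (hn : σ.n d = 1) : Pattern σ (σ.res d) :=
  ceil d hn (.var (arg1 d hn) 0)

/-- Totality `⌊φ⌋ ≡ ¬⌈¬φ⌉`. -/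
noncomputable def floor (d : σ.Sym) (hn : σ.n d = 1) (φ : Pattern σ (arg1 d hn)) :
    Pattern σ (σ.res d) :=
  .neg (ceil d hn (.neg φ))

/-- Equality pattern `φ = φ' ≡ ⌊φ ↔ φ'⌋`. -/
noncomputable def eqP (d : σ.Sym) (hn : σ.n d = 1) (φ φ' : Pattern σ (arg1 d hn)) :
    Pattern σ (σ.res d) :=
  floor d hn (φ.piff φ')

/-- Membership pattern `x ∈ φ ≡ ⌈x ∧ φ⌉`. -/
noncomputable def mem (d : σ.Sym) (hn : σ.n d = 1) (x : ℕ) (φ : Pattern σ (arg1 d hn)) :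
    Pattern σ (σ.res d) :=
  ceil d hn ((Pattern.var (arg1 d hn) x).and φ)

/-- The context `σ(φ₁,…,□,…,φₙ)` with `ψ` plugged into the `i`-th position. -/
def plug (f : σ.Sym) (i : Fin (σ.n f)) (args : ∀ j : Fin (σ.n f), Pattern σ (σ.arg f j))
    (ψ : Pattern σ (σ.arg f i)) : Pattern σ (σ.res f) :=
  .app f (fun j => if h : j = i then cast (by rw [h]) ψ else args j)

/-- Bound variables of a pattern. -/
def BV : {s : σ.S} → Pattern σ s → Set ((s : σ.S) × ℕ)
  | _, .var _ _ => ∅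
  | _, .app _ args => ⋃ i, BV (args i)
  | _, .neg φ => BV φ
  | _, .and φ ψ => BV φ ∪ BV ψ
  | _, .ex s' x φ => BV φ ∪ {⟨s', x⟩}

open Classical in
/-- Substitution `φ[ψ/x]` of pattern `ψ` for variable `x` of sort `t` (capture-free
provided the bound variables of `φ` are disjoint from the free variables of `ψ`). -/
noncomputable def subst : {s : σ.S} → Pattern σ s → (t : σ.S) → ℕ → Pattern σ t → Pattern σ s
  | _, .var s' y, t, x, ψ =>
      if h : s' = t ∧ y = x then cast (by rw [h.1]) ψ else .var s' y
  | _, .app f args, t, x, ψ => .app f (fun i => subst (args i) t x ψ)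
  | _, .neg φ, t, x, ψ => .neg (subst φ t x ψ)
  | _, .and φ₁ φ₂, t, x, ψ => .and (subst φ₁ t x ψ) (subst φ₂ t x ψ)
  | _, .ex s' y φ, t, x, ψ =>
      if s' = t ∧ y = x then .ex s' y φ else .ex s' y (subst φ t x ψ)

/-- Semantic entailment from a set of axiom patterns. -/
def Entails (F : Set ((s : σ.S) × Pattern σ s)) {s : σ.S} (φ : Pattern σ s) : Prop :=
  ∀ M : Model σ, (∀ ψ ∈ F, Sat M ψ.2) → Sat M φ

/-- A pattern is functional in `M` iff it evaluates to a singleton under every valuation. -/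
def Functional (M : Model σ) {s : σ.S} (φ : Pattern σ s) : Prop :=
  ∀ ρ : Val M, ∃ a : M.carrier s, eval φ ρ = {a}

variable {M : Model σ}

namespace Val

@[simp]
theorem upd_self (ρ : Val M) (s : σ.S) (x : ℕ) (a : M.carrier s) : ρ.upd s x a s x = a := by
  simp [upd]

theorem upd_of_ne (ρ : Val M) {s s' : σ.S} {x y : ℕ} (a : M.carrier s)
    (h : (⟨s', y⟩ : (_ : σ.S) × ℕ) ≠ ⟨s, x⟩) : ρ.upd s x a s' y = ρ s' y := by
  have : ¬(s' = s ∧ y = x) := by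
    rintro ⟨rfl, rfl⟩
    exact h rfl
  simp [upd, this]

theorem exists_forall_eq {ι : Type*} (τ : ι → σ.S) {v : ι → ℕ} (hv : Function.Injective v)
    (a : ∀ i, M.carrier (τ i)) : ∃ ρ : Val M, ∀ i, ρ (τ i) (v i) = a i := by
  classical
  refine ⟨fun s y => if h : ∃ i, τ i = s ∧ v i = y
      then cast (congrArg M.carrier h.choose_spec.1) (a h.choose) else (M.nonempty s).some,
    fun i => ?_⟩
  have h : ∃ j, τ j = τ i ∧ v j = v i := ⟨i, rfl, rfl⟩
  simp only [dif_pos h]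
  exact eq_of_heq ((cast_heq _ _).trans (congr_arg_heq a (hv h.choose_spec.2)))

end Val

theorem eval_congr {s : σ.S} (φ : Pattern σ s) {ρ ρ' : Val M}
    (h : ∀ p ∈ FV φ, ρ p.1 p.2 = ρ' p.1 p.2) : eval φ ρ = eval φ ρ' := by
  induction φ generalizing ρ ρ' with
  | var s x => simp [eval, h ⟨s, x⟩ rfl]
  | app f args ih =>
    simp only [eval, ih _ fun p hp => h p (Set.mem_iUnion.2 ⟨_, hp⟩)]
  | neg φ ih => simp only [eval, ih h]
  | and φ ψ ihφ ihψ =>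
    simp only [eval, ihφ fun p hp => h p (Or.inl hp), ihψ fun p hp => h p (Or.inr hp)]
  | ex s' x φ ih =>
    refine Set.iUnion_congr fun a => ih fun p hp => ?_
    by_cases hpx : p = ⟨s', x⟩
    · subst hpx
      simp
    · rw [Val.upd_of_ne _ _ hpx, Val.upd_of_ne _ _ hpx]
      exact h p ⟨hp, hpx⟩

theorem eval_upd_of_notMem_FV {s t : σ.S} {φ : Pattern σ s} {x : ℕ}
    (hx : (⟨t, x⟩ : (_ : σ.S) × ℕ) ∉ FV φ) (ρ : Val M) (a : M.carrier t) :
    eval φ (ρ.upd t x a) = eval φ ρ :=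
  eval_congr φ fun _ hp => Val.upd_of_ne ρ a fun hpx => hx (hpx ▸ hp)

theorem eval_piff_eq_univ_iff {s : σ.S} (φ ψ : Pattern σ s) (ρ : Val M) :
    eval (φ.piff ψ) ρ = Set.univ ↔ eval φ ρ = eval ψ ρ := by
  simp only [Pattern.piff, Pattern.imp, Pattern.or, eval, Set.ext_iff, Set.mem_inter_iff,
    Set.mem_compl_iff]
  exact forall_congr' fun _ => by tauto

section Definedness

variable (d : σ.Sym) (hn : σ.n d = 1)

theorem mem_eval_ceil {ψ : Pattern σ (arg1 d hn)} {ρ : Val M} {b : M.carrier (σ.res d)} :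
    b ∈ eval (ceil d hn ψ) ρ ↔ ∃ a, a ⟨0, by omega⟩ ∈ eval ψ ρ ∧ b ∈ M.interp d a := by
  refine exists_congr fun a => and_congr_left fun _ => ⟨fun h => ?_, fun h j => ?_⟩
  · exact h ⟨0, by omega⟩
  · obtain rfl : j = ⟨0, by omega⟩ := Fin.ext (by omega)
    exact h

theorem exists_mem_interp_of_sat_defAx (hdef : Sat M (defAx d hn))
    (c : M.carrier (arg1 d hn)) (b : M.carrier (σ.res d)) :
    ∃ a, a ⟨0, by omega⟩ = c ∧ b ∈ M.interp d a := by
  let ρ : Val M := fun s _ => (M.nonempty s).some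
  have hb : b ∈ eval (defAx d hn) (ρ.upd (arg1 d hn) 0 c) := hdef _ ▸ Set.mem_univ b
  obtain ⟨a, hac, hab⟩ := (mem_eval_ceil d hn).1 hb
  exact ⟨a, Set.mem_singleton_iff.1 (by simpa [eval] using hac), hab⟩

variable {d hn} (hdef : Sat M (defAx d hn))
include hdef

theorem mem_eval_ceil_iff_nonempty {ψ : Pattern σ (arg1 d hn)} {ρ : Val M}
    {b : M.carrier (σ.res d)} : b ∈ eval (ceil d hn ψ) ρ ↔ (eval ψ ρ).Nonempty := by
  refine (mem_eval_ceil d hn).trans ⟨fun ⟨a, ha, _⟩ => ⟨_, ha⟩, fun ⟨c, hc⟩ => ?_⟩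
  obtain ⟨a, rfl, hab⟩ := exists_mem_interp_of_sat_defAx d hn hdef c b
  exact ⟨a, hc, hab⟩

theorem mem_eval_floor_iff {ψ : Pattern σ (arg1 d hn)} {ρ : Val M}
    {b : M.carrier (σ.res d)} : b ∈ eval (floor d hn ψ) ρ ↔ eval ψ ρ = Set.univ := by
  rw [floor, eval, Set.mem_compl_iff, mem_eval_ceil_iff_nonempty hdef,
    Set.not_nonempty_iff_eq_empty, eval, Set.compl_empty_iff]

theorem mem_eval_eqP_iff {φ ψ : Pattern σ (arg1 d hn)} {ρ : Val M}
    {b : M.carrier (σ.res d)} : b ∈ eval (eqP d hn φ ψ) ρ ↔ eval φ ρ = eval ψ ρ := by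
  rw [eqP, mem_eval_floor_iff hdef, eval_piff_eq_univ_iff]

theorem functional_iff_sat_ex_eqP {φ : Pattern σ (arg1 d hn)} {y : ℕ}
    (hy : (⟨arg1 d hn, y⟩ : (_ : σ.S) × ℕ) ∉ FV φ) :
    Functional M φ ↔ Sat M (.ex (arg1 d hn) y (eqP d hn φ (.var (arg1 d hn) y))) := by
  have hupd : ∀ ρ a b, b ∈ eval (eqP d hn φ (.var (arg1 d hn) y)) (ρ.upd (arg1 d hn) y a) ↔
      eval φ ρ = {a} := fun ρ a b => by
    rw [mem_eval_eqP_iff hdef, eval_upd_of_notMem_FV hy, eval, Val.upd_self]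
  obtain ⟨b⟩ := M.nonempty (σ.res d)
  simp only [Functional, Sat, eval, Set.eq_univ_iff_forall, Set.mem_iUnion, hupd]
  exact forall_congr' fun _ => ⟨fun ⟨a, ha⟩ _ => ⟨a, ha⟩, fun h => h b⟩

end Definedness

section Cast

variable {s t : σ.S} (h : s = t) (hP : Pattern σ s = Pattern σ t) (φ : Pattern σ s)
include h

theorem FV_cast : FV (cast hP φ) = FV φ := by
  subst h
  rfl

theorem functional_cast : Functional M (cast hP φ) ↔ Functional M φ := by
  subst h
  rfl

end Cast

section Application

variable (f : σ.Sym) {v : Fin (σ.n f) → ℕ}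

theorem mem_FV_app_var {p : (_ : σ.S) × ℕ} :
    p ∈ FV (.app f fun i => .var (σ.arg f i) (v i)) ↔ ∃ i, p = ⟨σ.arg f i, v i⟩ := by
  simp [FV, eq_comm]

theorem eval_app_var (ρ : Val M) :
    eval (.app f fun i => .var (σ.arg f i) (v i)) ρ = M.interp f fun i => ρ (σ.arg f i) (v i) := by
  ext b
  simp only [eval, Set.mem_singleton_iff]
  exact ⟨fun ⟨a, ha, hb⟩ => funext ha ▸ hb, fun hb => ⟨_, fun _ => rfl, hb⟩⟩

theorem functional_app_var_iff (hv : Function.Injective v) :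
    Functional M (.app f fun i => .var (σ.arg f i) (v i)) ↔
      ∀ a : ∀ i, M.carrier (σ.arg f i), ∃ b, M.interp f a = {b} := by
  simp only [Functional, eval_app_var]
  refine ⟨fun h a => ?_, fun h ρ => h _⟩
  obtain ⟨ρ, hρ⟩ := Val.exists_forall_eq (M := M) (σ.arg f) hv a
  simpa only [hρ] using h ρ

end Application

end ML

/-- a pattern `φ` is functional in `M` iff `M ⊨ ∃y.(φ = y)` with
`y ∉ FV(φ)`; in particular `σ_M` is a total function iff
`M ⊨ ∃y. σ(x₁,…,xₙ) = y`. -/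
theorem stmt18 {σ : ML.Signature} (d : σ.Sym) (hn : σ.n d = 1) (M : ML.Model σ)
    (hdef : ML.Sat M (ML.defAx d hn)) :
    (∀ (φ : ML.Pattern σ (ML.arg1 d hn)) (y : ℕ),
      (⟨ML.arg1 d hn, y⟩ : (t : σ.S) × ℕ) ∉ ML.FV φ →
      (ML.Functional M φ ↔
        ML.Sat M (ML.Pattern.ex (ML.arg1 d hn) y
          (ML.eqP d hn φ (ML.Pattern.var (ML.arg1 d hn) y))))) ∧
    (∀ (f : σ.Sym) (hf : σ.res f = ML.arg1 d hn),
      ((∀ a : ∀ i : Fin (σ.n f), M.carrier (σ.arg f i), ∃ b, M.interp f a = {b}) ↔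
        ML.Sat M (ML.Pattern.ex (ML.arg1 d hn) 0
          (ML.eqP d hn
            (cast (by rw [hf])
              (ML.Pattern.app f (fun i => ML.Pattern.var (σ.arg f i) (i.val + 1))))
            (ML.Pattern.var (ML.arg1 d hn) 0))))) := by
  refine ⟨fun φ y hy => ML.functional_iff_sat_ex_eqP hdef hy, fun f hf => ?_⟩
  have hfv : (⟨ML.arg1 d hn, 0⟩ : (_ : σ.S) × ℕ) ∉
      ML.FV (cast (show ML.Pattern σ (σ.res f) = ML.Pattern σ (ML.arg1 d hn) by rw [hf])
        (ML.Pattern.app f fun i => ML.Pattern.var (σ.arg f i) (i.val + 1))) := by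
    rw [ML.FV_cast hf, ML.mem_FV_app_var]
    rintro ⟨i, hi⟩
    exact i.val.succ_ne_zero (congrArg Sigma.snd hi).symm
  rw [← ML.functional_iff_sat_ex_eqP hdef hfv, ML.functional_cast hf,
    ML.functional_app_var_iff f fun i j hij => Fin.ext (Nat.succ_injective hij)]
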